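/- arXiv:2002.09022 — 5 statements merged into one kernel-verified Lean document; each statement's English description precedes it below -/
import Mathlib

section
/- Let h : [0,∞) → ℝ be a continuous function with h(t) > 0 for all t ≥ 0, let k : [0,∞) → ℝ be a nonnegative and nondecreasing function, let G : [0,∞) → ℝ satisfy lim_{t→∞} G(t)/t = 0, and let c ≥ 0 and d > 0 be real constants such that ln h(t) ≤ c·t + k(t) − d·∫₀ᵗ h(s) ds + G(t) for all t ≥ 0. Then limsup_{t→∞} (1/t)·( −k(t) + d·∫₀ᵗ h(s) ds ) ≤ c. -/
/-!
Put `F t = ∫₀ᵗ h`. Where `G s ≤ ε s` and `s ≤ t`, the hypothesis exponentiates to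
`(exp (d F))' = d h exp (d F) ≤ d exp (k t) exp ((c + ε) s)`, using that `k` is nondecreasing.
Integrating over `[T, t]` and dividing by `exp (k t)` gives `d F t - k t ≤ C + (c + ε) t`,
and `ε > 0` is arbitrary.
-/

open MeasureTheory Filter Set Real

/-- `0 ≤ c` covers the junk value `limsup u l = 0` when `u` is not bounded below along `l`. -/
lemma limsup_le_of_forall_pos_eventually_le {ι : Type*} {l : Filter ι} {u : ι → ℝ} {c : ℝ}
    (hc : 0 ≤ c) (hu : ∀ ε > 0, ∀ᶠ x in l, u x ≤ c + ε) : limsup u l ≤ c := by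
  by_cases hcob : l.IsCoboundedUnder (· ≤ ·) u
  · exact le_of_forall_pos_le_add fun ε hε => limsup_le_of_le hcob (hu ε hε)
  · rw [Real.limsup_of_not_isCoboundedUnder hcob]
    exact hc

lemma limsup_inv_mul_le_of_le_add_mul {u : ℝ → ℝ} {c : ℝ} (hc : 0 ≤ c)
    (hu : ∀ ε > 0, ∃ C, ∀ᶠ t in atTop, u t ≤ C + (c + ε) * t) :
    limsup (fun t => (1 / t) * u t) atTop ≤ c := by
  refine limsup_le_of_forall_pos_eventually_le hc fun ε hε => ?_
  obtain ⟨C, hC⟩ := hu (ε / 2) (half_pos hε)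
  have hCt : ∀ᶠ t in atTop, C / t ≤ ε / 2 :=
    (tendsto_const_nhds.div_atTop tendsto_id).eventually_le_const (half_pos hε)
  filter_upwards [hC, hCt, eventually_gt_atTop 0] with t hut hCt ht
  calc (1 / t) * u t ≤ (1 / t) * (C + (c + ε / 2) * t) := by gcongr
    _ = C / t + (c + ε / 2) := by field_simp
    _ ≤ c + ε := by linarith

lemma hasDerivAt_integral_of_continuousOn_Ici {h : ℝ → ℝ} (hcont : ContinuousOn h (Ici 0))
    {s : ℝ} (hs : 0 < s) : HasDerivAt (fun t => ∫ x in (0:ℝ)..t, h x) (h s) s :=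
  intervalIntegral.integral_hasDerivAt_right
    ((hcont.mono (by simp [uIcc_of_le hs.le, Icc_subset_Ici_self])).intervalIntegrable)
    (hcont.mono Ioi_subset_Ici_self |>.stronglyMeasurableAtFilter isOpen_Ioi s hs)
    (hcont.continuousAt (Ici_mem_nhds hs))

lemma exp_mul_le_add_of_hasDerivAt {F f : ℝ → ℝ} {a d M T t : ℝ} (ha : a ≠ 0) (hd : 0 ≤ d)
    (hTt : T ≤ t) (hF : ∀ s ∈ Icc T t, HasDerivAt F (f s) s)
    (hbound : ∀ s ∈ Icc T t, f s * exp (d * F s) ≤ M * exp (a * s)) :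
    exp (d * F t) ≤ exp (d * F T) + d * M / a * (exp (a * t) - exp (a * T)) := by
  have hexpF : ∀ s ∈ Icc T t,
      HasDerivAt (fun s => exp (d * F s)) (exp (d * F s) * (d * f s)) s :=
    fun s hs => ((hF s hs).const_mul d).exp
  have hB : ∀ s, HasDerivAt (fun s => exp (d * F T) + d * M / a * (exp (a * s) - exp (a * T)))
      (d * M / a * (exp (a * s) * a)) s := fun s =>
    ((((hasDerivAt_id s).const_mul a).exp.sub_const _).const_mul _).const_add _ |>.congr_deriv
      (by simp)
  refine image_le_of_deriv_right_le_deriv_boundary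
    (fun s hs => (hexpF s hs).continuousAt.continuousWithinAt)
    (fun s hs => (hexpF s (Ico_subset_Icc_self hs)).hasDerivWithinAt) (by simp)
    (fun s _ => (hB s).continuousAt.continuousWithinAt) (fun s _ => (hB s).hasDerivWithinAt)
    (fun s hs => ?_) (right_mem_Icc.2 hTt)
  have := mul_le_mul_of_nonneg_left (hbound s (Ico_subset_Icc_self hs)) hd
  calc exp (d * F s) * (d * f s) = d * (f s * exp (d * F s)) := by ring
    _ ≤ d * (M * exp (a * s)) := this
    _ = d * M / a * (exp (a * s) * a) := by field_simp

lemma exists_mul_sub_le_add_mul {F h k : ℝ → ℝ} {a d T : ℝ} (ha : 0 < a) (hd : 0 < d)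
    (hT : 0 ≤ T) (hF : ∀ s, T ≤ s → HasDerivAt F (h s) s) (hk : MonotoneOn k (Ici T))
    (hlog : ∀ s, T ≤ s → log (h s) + d * F s ≤ k s + a * s) :
    ∃ C, ∀ t, T ≤ t → d * F t - k t ≤ C + a * t := by
  refine ⟨log (exp (d * F T - k T) + d / a), fun t hTt => ?_⟩
  have hbound : ∀ s ∈ Icc T t, h s * exp (d * F s) ≤ exp (k t) * exp (a * s) := fun s hs => by
    have hks : k s ≤ k t := hk hs.1 (hs.1.trans hs.2) hs.2
    calc h s * exp (d * F s) ≤ exp (log (h s) + d * F s) := by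
          rw [exp_add]
          exact mul_le_mul_of_nonneg_right (le_exp_of_log_le le_rfl) (exp_pos _).le
      _ ≤ exp (k t) * exp (a * s) := by
          rw [← exp_add]; exact exp_le_exp.2 (by linarith [hlog s hs.1])
  have hcomp := exp_mul_le_add_of_hasDerivAt ha.ne' hd.le hTt (fun s hs => hF s hs.1) hbound
  have hkT : k T ≤ k t := hk self_mem_Ici hTt hTt
  have hat : 1 ≤ exp (a * t) := one_le_exp (by nlinarith)
  have : exp (d * F t - k t) ≤ (exp (d * F T - k T) + d / a) * exp (a * t) :=
    calc exp (d * F t - k t) = exp (d * F t) * exp (-k t) := by rw [sub_eq_add_neg, exp_add]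
      _ ≤ (exp (d * F T) + d * exp (k t) / a * (exp (a * t) - exp (a * T))) * exp (-k t) := by
          gcongr
      _ = exp (d * F T - k t) + d / a * (exp (a * t) - exp (a * T)) := by
          rw [sub_eq_add_neg (d * F T), exp_add, exp_neg]
          field_simp
      _ ≤ exp (d * F T - k T) + d / a * exp (a * t) := by
          gcongr
          linarith [exp_pos (a * T)]
      _ ≤ (exp (d * F T - k T) + d / a) * exp (a * t) := by
          nlinarith [exp_pos (d * F T - k T), div_pos hd ha]
  rwa [← le_log_iff_exp_le (by positivity), log_mul (by positivity) (exp_pos _).ne', log_exp]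
    at this

theorem stmt0_general (h k G : ℝ → ℝ) (c d : ℝ)
    (hc : 0 ≤ c) (hd : 0 < d)
    (hcont : ContinuousOn h (Set.Ici (0 : ℝ)))
    (hkmono : ∀ s t : ℝ, 0 ≤ s → s ≤ t → k s ≤ k t)
    (hG : Tendsto (fun t => G t / t) atTop (nhds 0))
    (hineq : ∀ t : ℝ, 0 ≤ t →
      Real.log (h t) ≤ c * t + k t - d * (∫ s in (0:ℝ)..t, h s) + G t) :
    Filter.limsup (fun t => (1 / t) * (-(k t) + d * ∫ s in (0:ℝ)..t, h s)) atTop ≤ c := by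
  refine limsup_inv_mul_le_of_le_add_mul hc fun ε hε => ?_
  obtain ⟨T, hT⟩ := eventually_atTop.1 <|
    (hG.eventually_le_const hε).and (eventually_gt_atTop 0)
  have hT0 : 0 < T := (hT T le_rfl).2
  have hlog (s : ℝ) (hs : T ≤ s) :
      log (h s) + d * ∫ x in (0:ℝ)..s, h x ≤ k s + (c + ε) * s := by
    have hs0 := (hT s hs).2
    have hGs : G s ≤ ε * s := (div_le_iff₀ hs0).1 (hT s hs).1
    linarith [hineq s hs0.le]
  obtain ⟨C, hC⟩ := exists_mul_sub_le_add_mul (by positivity) hd hT0.le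
    (fun s hs => hasDerivAt_integral_of_continuousOn_Ici hcont (hT0.trans_le hs))
    (fun s hs t _ hst => hkmono s t (hT0.le.trans hs) hst) hlog
  refine ⟨C, (eventually_ge_atTop T).mono fun t ht => ?_⟩
  linarith [hC t ht]

/-- Lemma 3.4: if `ln h(t) ≤ c t + k(t) − d ∫₀ᵗ h + G(t)` with `k` nonnegative
nondecreasing and `G(t)/t → 0`, then
`limsup (1/t)(−k(t) + d ∫₀ᵗ h) ≤ c`. -/
theorem stmt0 (h k G : ℝ → ℝ) (c d : ℝ)
    (hc : 0 ≤ c) (hd : 0 < d)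
    (hcont : ContinuousOn h (Set.Ici (0 : ℝ)))
    (hpos : ∀ t : ℝ, 0 ≤ t → 0 < h t)
    (hknn : ∀ t : ℝ, 0 ≤ t → 0 ≤ k t)
    (hkmono : ∀ s t : ℝ, 0 ≤ s → s ≤ t → k s ≤ k t)
    (hG : Tendsto (fun t => G t / t) atTop (nhds 0))
    (hineq : ∀ t : ℝ, 0 ≤ t →
      Real.log (h t) ≤ c * t + k t - d * (∫ s in (0:ℝ)..t, h s) + G t) :
    Filter.limsup (fun t => (1 / t) * (-(k t) + d * ∫ s in (0:ℝ)..t, h s)) atTop ≤ c :=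
  stmt0_general h k G c d hc hd hcont hkmono hG hineq
end

section
/- Let f : [0,∞) → ℝ be a continuous function with f(t) > 0 for all t ≥ 0, let A > 0 be a constant, let k : [0,∞) → ℝ be a nonnegative and nondecreasing function, and let G : [0,∞) → ℝ satisfy lim_{t→∞} G(t)/t = 0. Suppose that for all t ≥ 0 one has the identity ln f(t) = ln f(0) + A·∫₀ᵗ (1/f(s)) ds − k(t) − G(t). Then limsup_{t→∞} (1/t)·ln f(t) ≤ 0. -/
/-!
With `Ψ(t) = A ∫₀ᵗ 1/f`, the hypothesis reads `(A / f) e^Ψ = (A / f(0)) e^(k + G)`, so integrating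
`(e^Ψ)' = (A / f) e^Ψ` gives `e^Ψ(t) = 1 + (A / f(0)) ∫₀ᵗ e^(k + G)`. Since `k` is nondecreasing and
`G(s) ≤ ε s` for large `s`, the integral is at most `C + t e^(k(t) + ε t)`; hence
`Ψ(t) - k(t) ≤ log (D + t) + ε t`, and `ln f(t) = ln f(0) + Ψ(t) - k(t) - G(t)` grows at most like
`ε t + o(t)` for every `ε > 0`.
-/

open MeasureTheory Filter Real Set Topology

theorem limsup_nonpos_of_forall_eventually_le {β : Type*} {l : Filter β} {u : β → ℝ}
    (h : ∀ c > 0, ∀ᶠ x in l, u x ≤ c) : limsup u l ≤ 0 := by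
  rw [limsup_eq]
  by_cases hbdd : BddBelow {a | ∀ᶠ x in l, u x ≤ a}
  · exact le_of_forall_gt_imp_ge_of_dense fun c hc => csInf_le hbdd (h c hc)
  · rw [Real.sInf_of_not_bddBelow hbdd]

theorem eventually_le_mul_of_tendsto_div {u : ℝ → ℝ}
    (hu : Tendsto (fun t => u t / t) atTop (𝓝 0)) {ε : ℝ} (hε : 0 < ε) :
    ∀ᶠ t in atTop, u t ≤ ε * t := by
  filter_upwards [hu.eventually_le_const hε, eventually_gt_atTop 0] with t hut ht
  rwa [div_le_iff₀ ht] at hut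

theorem limsup_one_div_mul_nonpos_of_le_add_mul {u : ℝ → ℝ}
    (h : ∀ ε > 0, ∃ r : ℝ → ℝ,
      Tendsto (fun t => r t / t) atTop (𝓝 0) ∧ ∀ᶠ t in atTop, u t ≤ r t + ε * t) :
    limsup (fun t => 1 / t * u t) atTop ≤ 0 := by
  refine limsup_nonpos_of_forall_eventually_le fun c hc => ?_
  obtain ⟨r, hr, hur⟩ := h (c / 2) (half_pos hc)
  filter_upwards [hur, eventually_le_mul_of_tendsto_div hr (half_pos hc), eventually_gt_atTop 0]
    with t hut hrt ht
  rw [one_div_mul_eq_div, div_le_iff₀ ht]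
  linarith

theorem tendsto_log_add_div_atTop (D : ℝ) :
    Tendsto (fun t => log (D + t) / t) atTop (𝓝 0) :=
  ((tendsto_pow_log_div_mul_add_atTop 1 (-D) 1 one_ne_zero).comp
    (tendsto_atTop_add_const_left atTop D tendsto_id)).congr fun t => by simp

section Primitive

variable {g : ℝ → ℝ} {a b : ℝ}

theorem ContinuousOn.continuousOn_primitive (hab : a ≤ b) (hg : ContinuousOn g (Icc a b)) :
    ContinuousOn (fun x => ∫ y in a..x, g y) (Icc a b) := by
  simpa [uIcc_of_le hab] using
    intervalIntegral.continuousOn_primitive_interval' (hg.intervalIntegrable_of_Icc hab)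
      left_mem_uIcc

theorem exp_integral_eq_one_add_integral (hab : a ≤ b) (hg : ContinuousOn g (Icc a b)) :
    exp (∫ x in a..b, g x) = 1 + ∫ x in a..b, g x * exp (∫ y in a..x, g y) := by
  have hF := hg.continuousOn_primitive hab
  have hderiv : ∀ x ∈ Ioo a b, HasDerivAt (fun x => exp (∫ y in a..x, g y))
      (g x * exp (∫ y in a..x, g y)) x := by
    intro x hx
    have hgx : ContinuousAt g x := hg.continuousAt (Icc_mem_nhds hx.1 hx.2)
    have hFx := intervalIntegral.integral_hasDerivAt_right
      ((hg.mono (Icc_subset_Icc_right hx.2.le)).intervalIntegrable_of_Icc hx.1.le)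
      ((hg.mono Ioo_subset_Icc_self).stronglyMeasurableAtFilter isOpen_Ioo x hx) hgx
    simpa [mul_comm] using hFx.exp
  rw [intervalIntegral.integral_eq_sub_of_hasDerivAt_of_le hab
    (continuous_exp.comp_continuousOn hF) hderiv
    ((hg.mul (continuous_exp.comp_continuousOn hF)).intervalIntegrable_of_Icc hab)]
  simp

end Primitive

theorem exists_integral_le_add_mul_of_eventually_le {h m : ℝ → ℝ}
    (hh : ∀ t ≥ 0, IntervalIntegrable h volume 0 t) (hm : MonotoneOn m (Ici 0))
    (hle : ∀ᶠ s in atTop, h s ≤ m s) :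
    ∃ C, ∀ᶠ t in atTop, ∫ s in (0 : ℝ)..t, h s ≤ C + t * m t := by
  obtain ⟨T, hT⟩ := eventually_atTop.1 (hle.and (eventually_ge_atTop 0))
  have hT0 : 0 ≤ T := (hT T le_rfl).2
  refine ⟨(∫ s in (0 : ℝ)..T, h s) - T * m T, ?_⟩
  filter_upwards [eventually_ge_atTop T] with t hTt
  have ht0 : 0 ≤ t := hT0.trans hTt
  have hhTt : IntervalIntegrable h volume T t := (hh T hT0).symm.trans (hh t ht0)
  have htail : ∫ s in T..t, h s ≤ (t - T) * m t := by
    simpa using intervalIntegral.integral_mono_on hTt hhTt intervalIntegrable_const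
      fun s hs => (hT s hs.1).1.trans (hm (hT s hs.1).2 ht0 hs.2)
  have hmT : T * m T ≤ T * m t := mul_le_mul_of_nonneg_left (hm hT0 ht0 hTt) hT0
  rw [← intervalIntegral.integral_add_adjacent_intervals (hh T hT0) hhTt]
  nlinarith

theorem sub_le_log_add_mul_of_exp_le {Ψ k D t ε : ℝ} (hk : 0 ≤ k) (hD : 0 < D) (ht : 0 ≤ t)
    (hε : 0 ≤ ε) (h : exp Ψ ≤ D + t * exp (k + ε * t)) : Ψ - k ≤ log (D + t) + ε * t := by
  rw [← sub_le_iff_le_add, le_log_iff_exp_le (by positivity)]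
  have hdecay : exp (-(k + ε * t)) ≤ 1 := exp_le_one_iff.2 (by nlinarith)
  calc exp (Ψ - k - ε * t) = exp Ψ * exp (-(k + ε * t)) := by rw [← exp_add]; ring_nf
    _ ≤ (D + t * exp (k + ε * t)) * exp (-(k + ε * t)) := by gcongr
    _ = D * exp (-(k + ε * t)) + t := by rw [add_mul, mul_assoc, ← exp_add]; simp
    _ ≤ D + t := by nlinarith

theorem exists_integral_sub_le_log_add_mul {g k H : ℝ → ℝ} (hg : ContinuousOn g (Ici 0))
    (hk0 : ∀ t ≥ 0, 0 ≤ k t) (hk : MonotoneOn k (Ici 0))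
    (hH : Tendsto (fun t => H t / t) atTop (𝓝 0))
    (hgH : ∀ᶠ s in atTop, g s * exp (∫ y in (0 : ℝ)..s, g y) ≤ exp (k s + H s))
    {ε : ℝ} (hε : 0 < ε) :
    ∃ D, ∀ᶠ t in atTop, (∫ s in (0 : ℝ)..t, g s) - k t ≤ log (D + t) + ε * t := by
  have hgt : ∀ t ≥ 0, ContinuousOn g (Icc 0 t) := fun _ _ => hg.mono Icc_subset_Ici_self
  obtain ⟨C, hC⟩ := exists_integral_le_add_mul_of_eventually_le
    (h := fun s => g s * exp (∫ y in (0 : ℝ)..s, g y)) (m := fun s => exp (k s + ε * s))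
    (fun t ht => ((hgt t ht).mul (continuous_exp.comp_continuousOn
      ((hgt t ht).continuousOn_primitive ht))).intervalIntegrable_of_Icc ht)
    (fun s hs t ht hst => exp_le_exp.2 (add_le_add (hk hs ht hst) (by gcongr)))
    (by
      filter_upwards [hgH, eventually_le_mul_of_tendsto_div hH hε] with s hs hHs
      exact hs.trans (by gcongr))
  refine ⟨max (1 + C) 1, ?_⟩
  filter_upwards [hC, eventually_ge_atTop 0] with t hCt ht
  refine sub_le_log_add_mul_of_exp_le (hk0 t ht) (lt_max_of_lt_right one_pos) ht hε.le ?_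
  rw [exp_integral_eq_one_add_integral ht (hgt t ht)]
  linarith [le_max_left (1 + C) 1]

/-- Application of Lemma 3.4: if `ln f(t) = ln f(0) + A ∫₀ᵗ 1/f − k(t) − G(t)`
with `k` nonnegative nondecreasing and `G(t)/t → 0`, then
`limsup (1/t) ln f(t) ≤ 0`. -/
theorem stmt1 (f k G : ℝ → ℝ) (A : ℝ) (hA : 0 < A)
    (hcont : ContinuousOn f (Set.Ici (0 : ℝ)))
    (hpos : ∀ t : ℝ, 0 ≤ t → 0 < f t)
    (hknn : ∀ t : ℝ, 0 ≤ t → 0 ≤ k t)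
    (hkmono : ∀ s t : ℝ, 0 ≤ s → s ≤ t → k s ≤ k t)
    (hG : Tendsto (fun t => G t / t) atTop (nhds 0))
    (hid : ∀ t : ℝ, 0 ≤ t →
      Real.log (f t) = Real.log (f 0) + A * (∫ s in (0:ℝ)..t, 1 / f s) - k t - G t) :
    Filter.limsup (fun t => (1 / t) * Real.log (f t)) atTop ≤ 0 := by
  have hf0 : 0 < f 0 := hpos 0 le_rfl
  set g : ℝ → ℝ := fun s => A / f s
  have hΨ : ∀ t ≥ 0, ∫ s in (0 : ℝ)..t, g s = log (f t) - log (f 0) + k t + G t := by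
    intro t ht
    simp only [g, div_eq_mul_one_div A, intervalIntegral.integral_const_mul]
    linarith [hid t ht]
  have hgΨ : ∀ᶠ s in atTop,
      g s * exp (∫ y in (0 : ℝ)..s, g y) ≤ exp (k s + (G s + log (A / f 0))) := by
    filter_upwards [eventually_ge_atTop 0] with s hs
    have hfs := hpos s hs
    refine le_of_eq ?_
    rw [hΨ s hs, show log (f s) - log (f 0) + k s + G s
        = k s + (G s + log (A / f 0)) + log (f s / A) by
      rw [log_div hA.ne' hf0.ne', log_div hfs.ne' hA.ne']; ring,
      exp_add, exp_log (div_pos hfs hA)]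
    simp only [g]
    field_simp
  refine limsup_one_div_mul_nonpos_of_le_add_mul fun ε hε => ?_
  obtain ⟨D, hD⟩ := exists_integral_sub_le_log_add_mul (g := g)
    (continuousOn_const.div hcont fun s hs => (hpos s hs).ne') hknn
    (fun s hs t _ hst => hkmono s t hs hst)
    (by simpa [add_div] using hG.add (tendsto_const_nhds.div_atTop tendsto_id)) hgΨ hε
  refine ⟨fun t => log (f 0) + log (D + t) - G t, ?_, ?_⟩
  · simpa [add_div, sub_div] using
      ((tendsto_const_nhds.div_atTop tendsto_id).add (tendsto_log_add_div_atTop D)).sub hG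
  · filter_upwards [hD, eventually_ge_atTop 0] with t hDt ht
    rw [hΨ t ht] at hDt
    linarith
end

section
/- Let Z be a measurable space equipped with a finite measure ν, and let η₂ : Z → ℝ be a bounded measurable function with 1 + η₂(u) > 0 for all u ∈ Z and ∫_Z (η₂(u) − ln(1+η₂(u))) ν(du) < ∞. Let A, μ₁, μ₂, β, γ > 0 and σ₂ ∈ ℝ, set C = μ₂ + γ + σ₂²/2 + ∫_Z (η₂(u) − ln(1+η₂(u))) ν(du), and define the threshold 𝒯₀ˢ = (βA/μ₁ − σ₂²/2 − ∫_Z (η₂(u) − ln(1+η₂(u))) ν(du))/(μ₂+γ), so that βA/μ₁ − C = (μ₂+γ)(𝒯₀ˢ − 1). Let S, I, ψ : [0,∞) → ℝ be continuous strictly positive functions with lim_{t→∞} ψ(t)/t = 0, lim_{t→∞} S(t)/t = 0, limsup_{t→∞} (1/t)·ln I(t) ≤ 0, and lim_{t→∞} (1/t)·∫₀ᵗ ψ(s) ds = A/μ₁, and let M : [0,∞) → ℝ satisfy lim_{t→∞} M(t)/t = 0. Suppose that for all t ≥ 0: ∫₀ᵗ βS(s)I(s) ds = (μ₁/β)·(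 ∫₀ᵗ βψ(s) ds − C·t ) + (ψ(t) − S(t)) − (ψ(0) − S(0)) − (μ₁/β)·ln(I(t)/I(0)) + M(t). Then liminf_{t→∞} (1/t)·∫₀ᵗ βS(s)I(s) ds ≥ (μ₁(μ₂+γ)/β)·(𝒯₀ˢ − 1); in particular this liminf is strictly positive whenever 𝒯₀ˢ > 1. -/
/-!
Divided by `t`, the identity writes the average `(1/t) ∫₀ᵗ β S I` as a drift converging to
`(μ₁/β)(βA/μ₁ − C) = (μ₁(μ₂+γ)/β)(𝒯₀ˢ − 1)` minus `(μ₁/β) (1/t) ln I(t)`, whose limsup is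
at most `0`; this gives the lower bound on the liminf. For the real `liminf` to be meaningful the
average must be frequently bounded above: were it to tend to `+∞`, the identity would force
`ln I(t) ≤ −t` eventually, so `β S I ≤ β t e⁻ᵗ ≤ β` eventually and the average would stay bounded.
-/

open MeasureTheory Filter Topology

theorem le_liminf_of_eventually_eq_sub_mul {α : Type*} {l : Filter α} {f g h : α → ℝ} {c L : ℝ}
    (hc : 0 < c) (hg : Tendsto g l (𝓝 L)) (hh : limsup h l ≤ 0)
    (hfg : ∀ᶠ x in l, f x = g x - c * h x) (hf : ∀ᶠ x in l, 0 ≤ f x)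
    (hcob : IsCoboundedUnder (· ≥ ·) l f) : L ≤ liminf f l := by
  have hbdd : IsBoundedUnder (· ≤ ·) l h := by
    refine ⟨(L + 1) / c, eventually_map.mpr ?_⟩
    filter_upwards [hfg, hf, hg.eventually_lt_const (lt_add_one L)] with x hfx hf0 hgx
    rw [le_div_iff₀ hc]
    linarith
  refine le_of_forall_sub_le fun ε hε => le_liminf_of_le hcob ?_
  have hhε : ∀ᶠ x in l, h x < ε / (2 * c) :=
    eventually_lt_of_limsup_lt (hh.trans_lt (by positivity)) hbdd
  filter_upwards [hfg, hhε, hg.eventually_const_lt (sub_lt_self L (half_pos hε))]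
    with x hfx hhx hgx
  have : c * h x ≤ ε / 2 :=
    calc c * h x ≤ c * (ε / (2 * c)) := by gcongr
      _ = ε / 2 := by field_simp
  linarith

theorem ContinuousOn.intervalIntegrable_of_Ici {φ : ℝ → ℝ} (hφ : ContinuousOn φ (Set.Ici 0))
    {a b : ℝ} (ha : 0 ≤ a) (hb : 0 ≤ b) : IntervalIntegrable φ volume a b :=
  (hφ.mono fun _ hx => le_trans (le_min ha hb) hx.1).intervalIntegrable

theorem isBoundedUnder_le_average_of_eventually_le {φ : ℝ → ℝ} {K : ℝ}
    (hφ : ContinuousOn φ (Set.Ici 0)) (hK : ∀ᶠ s in atTop, φ s ≤ K) :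
    IsBoundedUnder (· ≤ ·) atTop (fun t => (1 / t) * ∫ s in (0:ℝ)..t, φ s) := by
  obtain ⟨T, hT⟩ := eventually_atTop.mp hK
  set T₁ := max T 1
  have hT₁ : 1 ≤ T₁ := le_max_right T 1
  set a := ∫ s in (0:ℝ)..T₁, φ s
  refine ⟨|a| + max K 0, eventually_map.mpr ?_⟩
  filter_upwards [eventually_ge_atTop T₁] with t ht
  have ht₀ : 0 < t := by linarith
  have htail : ∫ s in T₁..t, φ s ≤ K * (t - T₁) := by
    have := intervalIntegral.integral_mono_on ht
      (hφ.intervalIntegrable_of_Ici (by linarith) ht₀.le) intervalIntegrable_const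
      fun s hs => hT s (le_trans (le_max_left T 1) hs.1)
    simpa [mul_comm] using this
  have hsplit : ∫ s in (0:ℝ)..t, φ s = a + ∫ s in T₁..t, φ s :=
    (intervalIntegral.integral_add_adjacent_intervals
      (hφ.intervalIntegrable_of_Ici le_rfl (by linarith))
      (hφ.intervalIntegrable_of_Ici (by linarith) ht₀.le)).symm
  have hK' : K * (t - T₁) ≤ max K 0 * t := by
    nlinarith [le_max_left K 0, le_max_right K 0]
  have ha : a ≤ |a| * t := by nlinarith [le_abs_self a, abs_nonneg a]
  rw [hsplit, one_div_mul_eq_div, div_le_iff₀ ht₀]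
  linarith

theorem eventually_mul_le_one_of_log_div_le_neg_one {S I : ℝ → ℝ}
    (hS : Tendsto (fun t => S t / t) atTop (𝓝 0)) (hIpos : ∀ᶠ t in atTop, 0 < I t)
    (hI : ∀ᶠ t in atTop, (1 / t) * Real.log (I t) ≤ -1) :
    ∀ᶠ t in atTop, S t * I t ≤ 1 := by
  filter_upwards [hS.eventually_lt_const one_pos, hIpos, hI, eventually_gt_atTop 0]
    with t hSt_div hIt hlog ht
  have hSt : S t ≤ t := ((div_lt_one ht).mp hSt_div).le
  have hIt' : I t ≤ Real.exp (-t) := by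
    rw [← Real.log_le_iff_le_exp hIt]
    rw [one_div_mul_eq_div, div_le_iff₀ ht] at hlog
    linarith
  calc S t * I t ≤ t * Real.exp (-t) := by gcongr
    _ = t / Real.exp t := by rw [Real.exp_neg, div_eq_mul_inv]
    _ ≤ 1 := by
      rw [div_le_one (Real.exp_pos t)]
      linarith [Real.add_one_le_exp t]

theorem isCoboundedUnder_ge_average_of_eq_sub_log {S I g : ℝ → ℝ} {β c L : ℝ}
    (hβ : 0 ≤ β) (hc : 0 < c) (hSIc : ContinuousOn (fun s => β * S s * I s) (Set.Ici 0))
    (hS : Tendsto (fun t => S t / t) atTop (𝓝 0)) (hIpos : ∀ᶠ t in atTop, 0 < I t)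
    (hg : Tendsto g atTop (𝓝 L))
    (hfg : ∀ᶠ t in atTop, (1 / t) * ∫ s in (0:ℝ)..t, β * S s * I s
      = g t - c * ((1 / t) * Real.log (I t))) :
    IsCoboundedUnder (· ≥ ·) atTop (fun t => (1 / t) * ∫ s in (0:ℝ)..t, β * S s * I s) := by
  suffices ∃ b, ∃ᶠ t in atTop, (1 / t) * ∫ s in (0:ℝ)..t, β * S s * I s ≤ b from
    this.elim fun _ hb => IsCoboundedUnder.of_frequently_le hb
  by_contra! hf
  have hdecay : ∀ᶠ t in atTop, (1 / t) * Real.log (I t) ≤ -1 := by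
    filter_upwards [hfg, hf (L + 1 + c), hg.eventually_lt_const (lt_add_one L)]
      with t hft hbig hgt
    have : c * ((1 / t) * Real.log (I t)) < c * (-1) := by linarith
    exact (lt_of_mul_lt_mul_left this hc.le).le
  have hSI : ∀ᶠ s in atTop, β * S s * I s ≤ β := by
    filter_upwards [eventually_mul_le_one_of_log_div_le_neg_one hS hIpos hdecay] with s hs
    calc β * S s * I s = β * (S s * I s) := by ring
      _ ≤ β * 1 := by gcongr
      _ = β := mul_one β
  obtain ⟨B, hB⟩ := isBoundedUnder_le_average_of_eventually_le hSIc hSI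
  obtain ⟨t, hbig, hle⟩ := ((hf B).and (eventually_map.mp hB)).exists
  exact hbig.not_ge hle

theorem stmt4_general {Z : Type*} [MeasurableSpace Z] (ν : Measure Z)
    (η₂ : Z → ℝ)
    (A μ₁ μ₂ β γ σ₂ C T : ℝ)
    (hμ₁ : 0 < μ₁) (hμ₂ : 0 < μ₂) (hβ : 0 < β) (hγ : 0 < γ)
    (hC : C = μ₂ + γ + σ₂ ^ 2 / 2 + ∫ u, (η₂ u - Real.log (1 + η₂ u)) ∂ν)
    (hTdef : T = (β * A / μ₁ - σ₂ ^ 2 / 2 - ∫ u, (η₂ u - Real.log (1 + η₂ u)) ∂ν) / (μ₂ + γ))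
    (S I ψ M : ℝ → ℝ)
    (hSc : ContinuousOn S (Set.Ici (0 : ℝ)))
    (hIc : ContinuousOn I (Set.Ici (0 : ℝ)))
    (hSpos : ∀ t : ℝ, 0 ≤ t → 0 < S t)
    (hIpos : ∀ t : ℝ, 0 ≤ t → 0 < I t)
    (hψsub : Tendsto (fun t => ψ t / t) atTop (nhds 0))
    (hSsub : Tendsto (fun t => S t / t) atTop (nhds 0))
    (hIlog : Filter.limsup (fun t => (1 / t) * Real.log (I t)) atTop ≤ 0)
    (hψavg : Tendsto (fun t => (1 / t) * ∫ s in (0:ℝ)..t, ψ s) atTop (nhds (A / μ₁)))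
    (hM : Tendsto (fun t => M t / t) atTop (nhds 0))
    (hid : ∀ t : ℝ, 0 ≤ t →
      (∫ s in (0:ℝ)..t, β * S s * I s) =
        (μ₁ / β) * ((∫ s in (0:ℝ)..t, β * ψ s) - C * t)
          + (ψ t - S t) - (ψ 0 - S 0) - (μ₁ / β) * Real.log (I t / I 0) + M t) :
    (μ₁ * (μ₂ + γ) / β) * (T - 1) ≤
        Filter.liminf (fun t => (1 / t) * ∫ s in (0:ℝ)..t, β * S s * I s) atTop ∧
      (1 < T →
        0 < Filter.liminf (fun t => (1 / t) * ∫ s in (0:ℝ)..t, β * S s * I s) atTop) := by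
  have hc : 0 < μ₁ / β := div_pos hμ₁ hβ
  set g : ℝ → ℝ := fun t => μ₁ / β * (β * ((1 / t) * ∫ s in (0:ℝ)..t, ψ s) - C) + ψ t / t
    - S t / t - (ψ 0 - S 0) / t + μ₁ / β * Real.log (I 0) / t + M t / t
  have hL : μ₁ * (μ₂ + γ) / β * (T - 1) = μ₁ / β * (β * (A / μ₁) - C) := by
    have : μ₂ + γ ≠ 0 := (add_pos hμ₂ hγ).ne'
    subst hC hTdef
    field_simp
    ring
  have hg : Tendsto g atTop (𝓝 (μ₁ * (μ₂ + γ) / β * (T - 1))) := by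
    have hconst (a : ℝ) : Tendsto (fun t : ℝ => a / t) atTop (𝓝 0) :=
      tendsto_const_nhds.div_atTop tendsto_id
    convert ((((((hψavg.const_mul β).sub_const C).const_mul (μ₁ / β)).add hψsub).sub
      hSsub).sub (hconst _)).add (hconst _) |>.add hM using 2
    rw [hL]
    ring
  have hfg : ∀ᶠ t in atTop, (1 / t) * ∫ s in (0:ℝ)..t, β * S s * I s
      = g t - μ₁ / β * ((1 / t) * Real.log (I t)) := by
    filter_upwards [eventually_gt_atTop 0] with t ht
    rw [hid t ht.le, intervalIntegral.integral_const_mul,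
      Real.log_div (hIpos t ht.le).ne' (hIpos 0 le_rfl).ne']
    simp only [g]
    field_simp
    ring
  have hf : ∀ᶠ t in atTop, 0 ≤ (1 / t) * ∫ s in (0:ℝ)..t, β * S s * I s := by
    filter_upwards [eventually_ge_atTop 0] with t ht
    exact mul_nonneg (by positivity) (intervalIntegral.integral_nonneg ht fun s hs =>
      mul_nonneg (mul_nonneg hβ.le (hSpos s hs.1).le) (hIpos s hs.1).le)
  have hSIc : ContinuousOn (fun s => β * S s * I s) (Set.Ici 0) :=
    (continuousOn_const.mul hSc).mul hIc
  have hmain := le_liminf_of_eventually_eq_sub_mul hc hg hIlog hfg hf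
    (isCoboundedUnder_ge_average_of_eq_sub_log hβ.le hc hSIc hSsub
      (eventually_ge_atTop 0 |>.mono hIpos) hg hfg)
  exact ⟨hmain, fun hT => lt_of_lt_of_le (mul_pos (by positivity) (sub_pos.mpr hT)) hmain⟩

/-- Persistence half of Theorem 3.1 (pathwise skeleton): from the Itô identity for
`∫₀ᵗ β S I`, one gets `liminf (1/t) ∫₀ᵗ β S I ≥ (μ₁(μ₂+γ)/β)(𝒯₀ˢ − 1)`, which is
strictly positive whenever `𝒯₀ˢ > 1`. -/
theorem stmt4 {Z : Type*} [MeasurableSpace Z] (ν : Measure Z) [IsFiniteMeasure ν]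
    (η₂ : Z → ℝ) (hη₂m : Measurable η₂) (hη₂b : ∃ B : ℝ, ∀ u : Z, |η₂ u| ≤ B)
    (hη₂pos : ∀ u : Z, 0 < 1 + η₂ u)
    (hint : Integrable (fun u => η₂ u - Real.log (1 + η₂ u)) ν)
    (A μ₁ μ₂ β γ σ₂ C T : ℝ)
    (hA : 0 < A) (hμ₁ : 0 < μ₁) (hμ₂ : 0 < μ₂) (hβ : 0 < β) (hγ : 0 < γ)
    (hC : C = μ₂ + γ + σ₂ ^ 2 / 2 + ∫ u, (η₂ u - Real.log (1 + η₂ u)) ∂ν)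
    (hTdef : T = (β * A / μ₁ - σ₂ ^ 2 / 2 - ∫ u, (η₂ u - Real.log (1 + η₂ u)) ∂ν) / (μ₂ + γ))
    (S I ψ M : ℝ → ℝ)
    (hSc : ContinuousOn S (Set.Ici (0 : ℝ)))
    (hIc : ContinuousOn I (Set.Ici (0 : ℝ)))
    (hψc : ContinuousOn ψ (Set.Ici (0 : ℝ)))
    (hSpos : ∀ t : ℝ, 0 ≤ t → 0 < S t)
    (hIpos : ∀ t : ℝ, 0 ≤ t → 0 < I t)
    (hψpos : ∀ t : ℝ, 0 ≤ t → 0 < ψ t)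
    (hψsub : Tendsto (fun t => ψ t / t) atTop (nhds 0))
    (hSsub : Tendsto (fun t => S t / t) atTop (nhds 0))
    (hIlog : Filter.limsup (fun t => (1 / t) * Real.log (I t)) atTop ≤ 0)
    (hψavg : Tendsto (fun t => (1 / t) * ∫ s in (0:ℝ)..t, ψ s) atTop (nhds (A / μ₁)))
    (hM : Tendsto (fun t => M t / t) atTop (nhds 0))
    (hid : ∀ t : ℝ, 0 ≤ t →
      (∫ s in (0:ℝ)..t, β * S s * I s) =
        (μ₁ / β) * ((∫ s in (0:ℝ)..t, β * ψ s) - C * t)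
          + (ψ t - S t) - (ψ 0 - S 0) - (μ₁ / β) * Real.log (I t / I 0) + M t) :
    (μ₁ * (μ₂ + γ) / β) * (T - 1) ≤
        Filter.liminf (fun t => (1 / t) * ∫ s in (0:ℝ)..t, β * S s * I s) atTop ∧
      (1 < T →
        0 < Filter.liminf (fun t => (1 / t) * ∫ s in (0:ℝ)..t, β * S s * I s) atTop) :=
  stmt4_general ν η₂ A μ₁ μ₂ β γ σ₂ C T hμ₁ hμ₂ hβ hγ hC hTdef S I ψ M hSc hIc hSpos hIpos hψsub
    hSsub hIlog hψavg hM hid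
end

section
/- Let p ≥ 1/2 be a real number, let S, I ≥ 0 be real numbers with S + I > 0, and let a, b > −1 be real numbers. Then ((1+a)S + (1+b)I)^{2p} − (S+I)^{2p} − 2p·(S+I)^{2p−1}·(aS + bI) ≤ (S+I)^{2p}·( (1 + max(a,b))^{2p} − 1 − 2p·min(a,b) ). -/
open Real

/-- Pointwise jump estimate for the generator applied to `(S+I)^{2p}`:
`((1+a)S + (1+b)I)^{2p} − (S+I)^{2p} − 2p (S+I)^{2p−1} (aS + bI)
  ≤ (S+I)^{2p} ((1 + max a b)^{2p} − 1 − 2p min a b)`. -/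
theorem stmt6 (p S I a b : ℝ) (hp : 1 / 2 ≤ p) (hS : 0 ≤ S) (hI : 0 ≤ I)
    (hSI : 0 < S + I) (ha : -1 < a) (hb : -1 < b) :
    ((1 + a) * S + (1 + b) * I) ^ (2 * p) - (S + I) ^ (2 * p)
        - 2 * p * (S + I) ^ (2 * p - 1) * (a * S + b * I)
      ≤ (S + I) ^ (2 * p) * ((1 + max a b) ^ (2 * p) - 1 - 2 * p * min a b) := by
  set T := S + I with hT
  have hTpos : (0:ℝ) < T := hSI
  have hM : (0:ℝ) ≤ 1 + max a b := by
    have := le_max_left a b; linarith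
  have h2p : (0:ℝ) ≤ 2 * p := by linarith
  -- first term
  have h1 : ((1 + a) * S + (1 + b) * I) ^ (2 * p) ≤ T ^ (2 * p) * (1 + max a b) ^ (2 * p) := by
    have hbase : (1 + a) * S + (1 + b) * I ≤ (1 + max a b) * T := by
      rw [hT, mul_add]
      gcongr <;> [skip; skip] <;> nlinarith [le_max_left a b, le_max_right a b]
    have hbase0 : (0:ℝ) ≤ (1 + a) * S + (1 + b) * I := by nlinarith
    calc ((1 + a) * S + (1 + b) * I) ^ (2 * p)
        ≤ ((1 + max a b) * T) ^ (2 * p) := Real.rpow_le_rpow hbase0 hbase h2p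
      _ = (1 + max a b) ^ (2 * p) * T ^ (2 * p) := Real.mul_rpow hM hTpos.le
      _ = T ^ (2 * p) * (1 + max a b) ^ (2 * p) := by ring
  -- jump linear term
  have h2 : T ^ (2 * p) * min a b ≤ T ^ (2 * p - 1) * (a * S + b * I) := by
    have hmin : min a b * T ≤ a * S + b * I := by
      rw [hT]; nlinarith [min_le_left a b, min_le_right a b]
    have hpow : T ^ (2 * p) = T ^ (2 * p - 1) * T := by
      rw [← Real.rpow_add_one hTpos.ne']; ring_nf
    calc T ^ (2 * p) * min a b = T ^ (2 * p - 1) * (min a b * T) := by rw [hpow]; ring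
      _ ≤ T ^ (2 * p - 1) * (a * S + b * I) := by
          have := Real.rpow_pos_of_pos hTpos (2 * p - 1)
          exact mul_le_mul_of_nonneg_left hmin this.le
  have h3 : 2 * p * (T ^ (2 * p) * min a b) ≤ 2 * p * (T ^ (2 * p - 1) * (a * S + b * I)) :=
    mul_le_mul_of_nonneg_left h2 h2p
  nlinarith [h1, h3]
end

section
/- Let p ≥ 1/2 be a real number, let A, μ₁ > 0 and α, γ ≥ 0 be constants, let σ₁, σ₂ ∈ ℝ, let Z be a measurable space with a finite measure ν, and let η₁, η₂ : Z → ℝ be bounded measurable functions with η₁(u) > −1 and η₂(u) > −1 for all u ∈ Z. Define χ = μ₁ − ((2p−1)/2)·max(σ₁², σ₂²) − (1/(2p))·∫_Z ( (1 + max(η₁(u),η₂(u)))^{2p} − 1 − 2p·min(η₁(u),η₂(u)) ) ν(du). Then for all S, I > 0: 2p·(S+I)^{2p−1}·( A − μ₁ S − (μ₁+α+γ) I ) + p(2p−1)·(S+I)^{2p−2}·( σ₁² S² + σ₂² I² ) + ∫_Z [ ((1+η₁(u))S + (1+η₂(u))I)^{2p} − (S+I)^{2p} − 2p·(S+I)^{2p−1}·(η₁(u)S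 + η₂(u)I) ] ν(du) ≤ 2p·(S+I)^{2p−2}·( A·(S+I) − χ·(S+I)² ). -/
/-!
The jump term is controlled pointwise: `(1+η₁)S + (1+η₂)I ≤ (1 + max η₁ η₂)(S+I)` and
`η₁S + η₂I ≥ min η₁ η₂ · (S+I)`, so the integrand is at most `(S+I)^{2p}` times the integrand
defining `χ`. The diffusion term is bounded by `max(σ₁², σ₂²)(S+I)²` and the drift by
`A - μ₁(S+I)`; factoring out `2p(S+I)^{2p-2}` then gives exactly the definition of `χ`.
-/

open MeasureTheory Real Set

theorem integrable_comp_of_isBounded_range {Z X E : Type*} [MeasurableSpace Z] {ν : Measure Z}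
    [IsFiniteMeasure ν] [PseudoMetricSpace X] [ProperSpace X] [MeasurableSpace X]
    [BorelSpace X] [NormedAddCommGroup E] {η : Z → X} (hη : Measurable η)
    (hb : Bornology.IsBounded (range η)) {F : X → E} (hF : Continuous F) :
    Integrable (fun u => F (η u)) ν := by
  obtain ⟨C, hC⟩ := hb.isCompact_closure.exists_bound_of_continuousOn hF.continuousOn
  exact Integrable.of_bound (hF.comp_aestronglyMeasurable hη.aestronglyMeasurable) C
    (ae_of_all _ fun u => hC _ (subset_closure (mem_range_self u)))

theorem isBounded_range_prodMk_of_abs_le {Z : Type*} {f g : Z → ℝ} {B C : ℝ}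
    (hf : ∀ u, |f u| ≤ B) (hg : ∀ u, |g u| ≤ C) :
    Bornology.IsBounded (range fun u => (f u, g u)) :=
  isBounded_iff_forall_norm_le.2
    ⟨max B C, forall_mem_range.2 fun u => max_le_max (hf u) (hg u)⟩

theorem mul_sq_add_mul_sq_le_max_mul_add_sq {a b S I : ℝ} (ha : 0 ≤ a) (hS : 0 ≤ S) (hI : 0 ≤ I) :
    a * S ^ 2 + b * I ^ 2 ≤ max a b * (S + I) ^ 2 := by
  have hmax : 0 ≤ max a b := ha.trans (le_max_left a b)
  nlinarith [le_max_left a b, le_max_right a b, sq_nonneg S, sq_nonneg I, mul_nonneg hS hI,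
    mul_nonneg hmax (mul_nonneg hS hI)]

theorem rpow_jump_le {r x y S I : ℝ} (hr : 0 ≤ r) (hx : -1 ≤ x) (hy : -1 ≤ y)
    (hS : 0 < S) (hI : 0 < I) :
    ((1 + x) * S + (1 + y) * I) ^ r - (S + I) ^ r - r * (S + I) ^ (r - 1) * (x * S + y * I)
      ≤ (S + I) ^ r * ((1 + max x y) ^ r - 1 - r * min x y) := by
  have hN : 0 < S + I := add_pos hS hI
  have hup : ((1 + x) * S + (1 + y) * I) ^ r ≤ (1 + max x y) ^ r * (S + I) ^ r := by
    rw [← mul_rpow (by linarith [le_max_left x y]) hN.le]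
    refine rpow_le_rpow (by nlinarith) ?_ hr
    nlinarith [le_max_left x y, le_max_right x y]
  have hlow : r * (S + I) ^ (r - 1) * (min x y * (S + I)) ≤
      r * (S + I) ^ (r - 1) * (x * S + y * I) := by
    refine mul_le_mul_of_nonneg_left ?_ (by positivity)
    nlinarith [min_le_left x y, min_le_right x y]
  have hpow : (S + I) ^ (r - 1) * (S + I) = (S + I) ^ r := by
    rw [← rpow_add_one hN.ne', sub_add_cancel]
  linear_combination hup + hlow - r * min x y * hpow

theorem integral_rpow_jump_le {Z : Type*} [MeasurableSpace Z] {ν : Measure Z} [IsFiniteMeasure ν]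
    {r S I B₁ B₂ : ℝ} {η₁ η₂ : Z → ℝ} (hr : 0 ≤ r) (hS : 0 < S) (hI : 0 < I)
    (h1m : Measurable η₁) (h2m : Measurable η₂) (hB₁ : ∀ u, |η₁ u| ≤ B₁)
    (hB₂ : ∀ u, |η₂ u| ≤ B₂) (h1 : ∀ u, -1 ≤ η₁ u) (h2 : ∀ u, -1 ≤ η₂ u) :
    ∫ u, (((1 + η₁ u) * S + (1 + η₂ u) * I) ^ r - (S + I) ^ r
        - r * (S + I) ^ (r - 1) * (η₁ u * S + η₂ u * I)) ∂ν
      ≤ (S + I) ^ r * ∫ u, ((1 + max (η₁ u) (η₂ u)) ^ r - 1 - r * min (η₁ u) (η₂ u)) ∂ν := by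
  have hη := isBounded_range_prodMk_of_abs_le hB₁ hB₂
  have hηm : Measurable fun u => (η₁ u, η₂ u) := h1m.prodMk h2m
  rw [← integral_const_mul]
  refine integral_mono (integrable_comp_of_isBounded_range hηm hη
    (F := fun z : ℝ × ℝ => ((1 + z.1) * S + (1 + z.2) * I) ^ r - (S + I) ^ r
      - r * (S + I) ^ (r - 1) * (z.1 * S + z.2 * I)) ?_)
    ((integrable_comp_of_isBounded_range hηm hη
      (F := fun z : ℝ × ℝ => (1 + max z.1 z.2) ^ r - 1 - r * min z.1 z.2) ?_).const_mul _)
    fun u => rpow_jump_le hr (h1 u) (h2 u) hS hI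
  all_goals fun_prop (disch := exact hr)

theorem stmt9_general (p A μ₁ α γ σ₁ σ₂ : ℝ) (hp : 1 / 2 ≤ p)
    (hα : 0 ≤ α) (hγ : 0 ≤ γ)
    {Z : Type*} [MeasurableSpace Z] (ν : Measure Z) [IsFiniteMeasure ν]
    (η₁ η₂ : Z → ℝ) (h1m : Measurable η₁) (h2m : Measurable η₂)
    (h1b : ∃ B : ℝ, ∀ u : Z, |η₁ u| ≤ B) (h2b : ∃ B : ℝ, ∀ u : Z, |η₂ u| ≤ B)
    (h1 : ∀ u : Z, -1 < η₁ u) (h2 : ∀ u : Z, -1 < η₂ u)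
    (χ : ℝ)
    (hχ : χ = μ₁ - ((2 * p - 1) / 2) * max (σ₁ ^ 2) (σ₂ ^ 2)
        - (1 / (2 * p)) * ∫ u, ((1 + max (η₁ u) (η₂ u)) ^ (2 * p) - 1
            - 2 * p * min (η₁ u) (η₂ u)) ∂ν) :
    ∀ S I : ℝ, 0 < S → 0 < I →
      2 * p * (S + I) ^ (2 * p - 1) * (A - μ₁ * S - (μ₁ + α + γ) * I)
          + p * (2 * p - 1) * (S + I) ^ (2 * p - 2) * (σ₁ ^ 2 * S ^ 2 + σ₂ ^ 2 * I ^ 2)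
          + ∫ u, (((1 + η₁ u) * S + (1 + η₂ u) * I) ^ (2 * p) - (S + I) ^ (2 * p)
              - 2 * p * (S + I) ^ (2 * p - 1) * (η₁ u * S + η₂ u * I)) ∂ν
        ≤ 2 * p * (S + I) ^ (2 * p - 2) * (A * (S + I) - χ * (S + I) ^ 2) := by
  intro S I hS hI
  obtain ⟨B₁, hB₁⟩ := h1b
  obtain ⟨B₂, hB₂⟩ := h2b
  have hp0 : 0 < p := by linarith
  have hN : 0 < S + I := add_pos hS hI
  have hjump := integral_rpow_jump_le (ν := ν) (r := 2 * p) (by linarith) hS hI h1m h2m hB₁ hB₂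
    (fun u => (h1 u).le) (fun u => (h2 u).le)
  set J := ∫ u, ((1 + max (η₁ u) (η₂ u)) ^ (2 * p) - 1 - 2 * p * min (η₁ u) (η₂ u)) ∂ν
  have hpow₁ : (S + I) ^ (2 * p - 1) = (S + I) ^ (2 * p - 2) * (S + I) := by
    rw [← rpow_add_one hN.ne']; ring_nf
  have hpow₂ : (S + I) ^ (2 * p) = (S + I) ^ (2 * p - 2) * (S + I) ^ 2 := by
    rw [← rpow_add_natCast hN.ne']; push_cast; ring_nf
  have hχ' : 2 * p * χ = 2 * p * μ₁ - p * (2 * p - 1) * max (σ₁ ^ 2) (σ₂ ^ 2) - J := by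
    rw [hχ]; field_simp
  have hdrift : 0 ≤ 2 * p * (S + I) ^ (2 * p - 2) * (S + I) * ((α + γ) * I) := by positivity
  have hdiff : p * (2 * p - 1) * (S + I) ^ (2 * p - 2) * (σ₁ ^ 2 * S ^ 2 + σ₂ ^ 2 * I ^ 2)
      ≤ p * (2 * p - 1) * (S + I) ^ (2 * p - 2) * (max (σ₁ ^ 2) (σ₂ ^ 2) * (S + I) ^ 2) :=
    mul_le_mul_of_nonneg_left (mul_sq_add_mul_sq_le_max_mul_add_sq (sq_nonneg σ₁) hS.le hI.le)
      (mul_nonneg (mul_nonneg hp0.le (by linarith)) (rpow_pos_of_pos hN _).le)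
  linear_combination hdrift + hdiff + hjump
    + 2 * p * (A - μ₁ * S - (μ₁ + α + γ) * I) * hpow₁ + J * hpow₂
    + (S + I) ^ (2 * p - 2) * (S + I) ^ 2 * hχ'

/-- Core drift estimate of Lemma 3.3: the generator of the stochastic SIR model
with Lévy jumps applied to `(S,I) ↦ (S+I)^{2p}` is bounded by
`2p (S+I)^{2p−2} (A(S+I) − χ (S+I)²)`. -/
theorem stmt9 (p A μ₁ α γ σ₁ σ₂ : ℝ) (hp : 1 / 2 ≤ p) (hA : 0 < A) (hμ₁ : 0 < μ₁)
    (hα : 0 ≤ α) (hγ : 0 ≤ γ)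
    {Z : Type*} [MeasurableSpace Z] (ν : Measure Z) [IsFiniteMeasure ν]
    (η₁ η₂ : Z → ℝ) (h1m : Measurable η₁) (h2m : Measurable η₂)
    (h1b : ∃ B : ℝ, ∀ u : Z, |η₁ u| ≤ B) (h2b : ∃ B : ℝ, ∀ u : Z, |η₂ u| ≤ B)
    (h1 : ∀ u : Z, -1 < η₁ u) (h2 : ∀ u : Z, -1 < η₂ u)
    (χ : ℝ)
    (hχ : χ = μ₁ - ((2 * p - 1) / 2) * max (σ₁ ^ 2) (σ₂ ^ 2)
        - (1 / (2 * p)) * ∫ u, ((1 + max (η₁ u) (η₂ u)) ^ (2 * p) - 1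
            - 2 * p * min (η₁ u) (η₂ u)) ∂ν) :
    ∀ S I : ℝ, 0 < S → 0 < I →
      2 * p * (S + I) ^ (2 * p - 1) * (A - μ₁ * S - (μ₁ + α + γ) * I)
          + p * (2 * p - 1) * (S + I) ^ (2 * p - 2) * (σ₁ ^ 2 * S ^ 2 + σ₂ ^ 2 * I ^ 2)
          + ∫ u, (((1 + η₁ u) * S + (1 + η₂ u) * I) ^ (2 * p) - (S + I) ^ (2 * p)
              - 2 * p * (S + I) ^ (2 * p - 1) * (η₁ u * S + η₂ u * I)) ∂ν
        ≤ 2 * p * (S + I) ^ (2 * p - 2) * (A * (S + I) - χ * (S + I) ^ 2) :=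
  stmt9_general p A μ₁ α γ σ₁ σ₂ hp hα hγ ν η₁ η₂ h1m h2m h1b h2b h1 h2 χ hχ
end
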